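/- arXiv:2111.04292 — 2 statements merged into one kernel-verified Lean document; each statement's English description precedes it below -/
import Mathlib

section
/- For every even natural number n, the greatest common divisor of the 16 entries of the matrix B(n) equals gcd(t(n), ζ(n)), where ζ(n) = (s(n) + (5a−b)·t(n))/2. -/
open Matrix

/-- The combinatorial Seifert-type matrix of a 2-bridge knot of genus two with
Alexander polynomial `A(z) = a + (b-a)z + (1-2b)z² + (b-a)z³ + a z⁴`. -/
def Gamma (a b : ℤ) : Matrix (Fin 4) (Fin 4) ℤ :=
  !![a, -1 + b, -b, -a;
     a, b, -b, -a;
     a, b, 1 - b, -a;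
     a, b, 1 - b, 1 - a]

/-- `B(n) = Γⁿ − (Γ − I)ⁿ`. -/
def B (a b : ℤ) (n : ℕ) : Matrix (Fin 4) (Fin 4) ℤ :=
  Gamma a b ^ n - (Gamma a b - 1) ^ n

def G2 (a b : ℤ) : Matrix (Fin 4) (Fin 4) ℤ :=
  !![-a, -b - a, -a, 0;
     0, -a, -b - a, -a;
     a, b - a, 1 - 2*b - a, -2*a;
     2*a, 2*b - a, 2 - 3*b - a, 1 - 3*a]

def G4 (a b : ℤ) : Matrix (Fin 4) (Fin 4) ℤ :=
  !![0, a*b + 3*a^2, b^2 - a + 4*a*b + 3*a^2, a*b + 3*a^2;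
     -a*b - 3*a^2, -b^2 - 2*a*b + 3*a^2, -b + 2*b^2 - 3*a + 7*a*b + 3*a^2, -a + 2*a*b + 6*a^2;
     a - 2*a*b - 6*a^2, b - 2*b^2 - a - 5*a*b + 3*a^2, 1 - 4*b + 3*b^2 - 6*a + 10*a*b + 3*a^2, -4*a + 3*a*b + 9*a^2;
     4*a - 3*a*b - 9*a^2, 4*b - 3*b^2 - 3*a - 8*a*b + 3*a^2, 4 - 10*b + 4*b^2 - 10*a + 13*a*b + 3*a^2, 1 - 10*a + 4*a*b + 12*a^2]

set_option maxHeartbeats 1000000 in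
def G6 (a b : ℤ) : Matrix (Fin 4) (Fin 4) ℤ :=
  !![a*b^2 - a^2 + 6*a^2*b + 9*a^3, b^3 - a*b + 5*a*b^2 + a^2 + 3*a^2*b - 9*a^3, b^2 - 2*b^3 - a + 8*a*b - 13*a*b^2 + 10*a^2 - 24*a^2*b - 9*a^3, a*b - 2*a*b^2 + 5*a^2 - 12*a^2*b - 18*a^3;
     -a*b + 2*a*b^2 - 5*a^2 + 12*a^2*b + 18*a^3, -b^2 + 2*b^3 - 4*a*b + 11*a*b^2 + 4*a^2 + 12*a^2*b - 9*a^3, -b + 4*b^2 - 3*b^3 - 5*a + 21*a*b - 19*a*b^2 + 19*a^2 - 33*a^2*b - 9*a^3, -a + 4*a*b - 3*a*b^2 + 15*a^2 - 18*a^2*b - 27*a^3;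
     a - 4*a*b + 3*a*b^2 - 15*a^2 + 18*a^2*b + 27*a^3, b - 4*b^2 + 3*b^3 - a - 12*a*b + 17*a*b^2 + 10*a^2 + 21*a^2*b - 9*a^3, 1 - 6*b + 10*b^2 - 4*b^3 - 15*a + 44*a*b - 25*a*b^2 + 31*a^2 - 42*a^2*b - 9*a^3, -6*a + 10*a*b - 4*a*b^2 + 34*a^2 - 24*a^2*b - 36*a^3;
     6*a - 10*a*b + 4*a*b^2 - 34*a^2 + 24*a^2*b + 36*a^3, 6*b - 10*b^2 + 4*b^3 - 5*a - 28*a*b + 23*a*b^2 + 19*a^2 + 30*a^2*b - 9*a^3, 6 - 21*b + 20*b^2 - 5*b^3 - 35*a + 80*a*b - 31*a*b^2 + 46*a^2 - 51*a^2*b - 9*a^3, 1 - 21*a + 20*a*b - 5*a*b^2 + 65*a^2 - 30*a^2*b - 45*a^3]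

set_option maxHeartbeats 1000000 in
def G8 (a b : ℤ) : Matrix (Fin 4) (Fin 4) ℤ :=
  !![a*b^2 - 2*a*b^3 - a^2 + 10*a^2*b - 18*a^2*b^2 + 21*a^3 - 54*a^3*b - 54*a^4, b^3 - 2*b^4 - a*b + 9*a*b^2 - 17*a*b^3 + a^2 + 13*a^2*b - 45*a^2*b^2 - 15*a^3 - 27*a^3*b + 27*a^4, b^2 - 4*b^3 + 3*b^4 - a + 12*a*b - 36*a*b^2 + 28*a*b^3 + 21*a^2 - 92*a^2*b + 90*a^2*b^2 - 60*a^3 + 108*a^3*b + 27*a^4, a*b - 4*a*b^2 + 3*a*b^3 + 7*a^2 - 30*a^2*b + 27*a^2*b^2 - 54*a^3 + 81*a^3*b + 81*a^4;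
     -a*b + 4*a*b^2 - 3*a*b^3 - 7*a^2 + 30*a^2*b - 27*a^2*b^2 + 54*a^3 - 81*a^3*b - 81*a^4, -b^2 + 4*b^3 - 3*b^4 - 6*a*b + 27*a*b^2 - 26*a*b^3 + 6*a^2 + 34*a^2*b - 72*a^2*b^2 - 33*a^3 - 54*a^3*b + 27*a^4, -b + 6*b^2 - 10*b^3 + 4*b^4 - 7*a + 43*a*b - 78*a*b^2 + 37*a*b^3 + 55*a^2 - 176*a^2*b + 117*a^2*b^2 - 96*a^3 + 135*a^3*b + 27*a^4, -a + 6*a*b - 10*a*b^2 + 4*a*b^3 + 28*a^2 - 68*a^2*b + 36*a^2*b^2 - 114*a^3 + 108*a^3*b + 108*a^4;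
     a - 6*a*b + 10*a*b^2 - 4*a*b^3 - 28*a^2 + 68*a^2*b - 36*a^2*b^2 + 114*a^3 - 108*a^3*b - 108*a^4, b - 6*b^2 + 10*b^3 - 4*b^4 - a - 23*a*b + 62*a*b^2 - 35*a*b^3 + 21*a^2 + 76*a^2*b - 99*a^2*b^2 - 60*a^3 - 81*a^3*b + 27*a^4, 1 - 8*b + 21*b^2 - 20*b^3 + 5*b^4 - 28*a + 118*a*b - 145*a*b^2 + 46*a*b^3 + 120*a^2 - 302*a^2*b + 144*a^2*b^2 - 141*a^3 + 162*a^3*b + 27*a^4, -8*a + 21*a*b - 20*a*b^2 + 5*a*b^3 + 83*a^2 - 130*a^2*b + 45*a^2*b^2 - 210*a^3 + 135*a^3*b + 135*a^4;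
     8*a - 21*a*b + 20*a*b^2 - 5*a*b^3 - 83*a^2 + 130*a^2*b - 45*a^2*b^2 + 210*a^3 - 135*a^3*b - 135*a^4, 8*b - 21*b^2 + 20*b^3 - 5*b^4 - 7*a - 68*a*b + 120*a*b^2 - 44*a*b^3 + 55*a^2 + 148*a^2*b - 126*a^2*b^2 - 96*a^3 - 108*a^3*b + 27*a^4, 8 - 36*b + 56*b^2 - 35*b^3 + 6*b^4 - 84*a + 273*a*b - 243*a*b^2 + 55*a*b^3 + 231*a^2 - 479*a^2*b + 171*a^2*b^2 - 195*a^3 + 189*a^3*b + 27*a^4, 1 - 36*a + 56*a*b - 35*a*b^2 + 6*a*b^3 + 203*a^2 - 222*a^2*b + 54*a^2*b^2 - 351*a^3 + 162*a^3*b + 162*a^4]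

def H2 (a b : ℤ) : Matrix (Fin 4) (Fin 4) ℤ :=
  !![1 - 3*a, 2 - 3*b - a, 2*b - a, 2*a;
     -2*a, 1 - 2*b - a, b - a, a;
     -a, -b - a, -a, 0;
     0, -a, -b - a, -a]

def H4 (a b : ℤ) : Matrix (Fin 4) (Fin 4) ℤ :=
  !![1 - 10*a + 4*a*b + 12*a^2, 4 - 10*b + 4*b^2 - 10*a + 13*a*b + 3*a^2, 4*b - 3*b^2 - 3*a - 8*a*b + 3*a^2, 4*a - 3*a*b - 9*a^2;
     -4*a + 3*a*b + 9*a^2, 1 - 4*b + 3*b^2 - 6*a + 10*a*b + 3*a^2, b - 2*b^2 - a - 5*a*b + 3*a^2, a - 2*a*b - 6*a^2;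
     -a + 2*a*b + 6*a^2, -b + 2*b^2 - 3*a + 7*a*b + 3*a^2, -b^2 - 2*a*b + 3*a^2, -a*b - 3*a^2;
     a*b + 3*a^2, b^2 - a + 4*a*b + 3*a^2, a*b + 3*a^2, 0]

set_option maxHeartbeats 1000000 in
def H6 (a b : ℤ) : Matrix (Fin 4) (Fin 4) ℤ :=
  !![1 - 21*a + 20*a*b - 5*a*b^2 + 65*a^2 - 30*a^2*b - 45*a^3, 6 - 21*b + 20*b^2 - 5*b^3 - 35*a + 80*a*b - 31*a*b^2 + 46*a^2 - 51*a^2*b - 9*a^3, 6*b - 10*b^2 + 4*b^3 - 5*a - 28*a*b + 23*a*b^2 + 19*a^2 + 30*a^2*b - 9*a^3, 6*a - 10*a*b + 4*a*b^2 - 34*a^2 + 24*a^2*b + 36*a^3;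
     -6*a + 10*a*b - 4*a*b^2 + 34*a^2 - 24*a^2*b - 36*a^3, 1 - 6*b + 10*b^2 - 4*b^3 - 15*a + 44*a*b - 25*a*b^2 + 31*a^2 - 42*a^2*b - 9*a^3, b - 4*b^2 + 3*b^3 - a - 12*a*b + 17*a*b^2 + 10*a^2 + 21*a^2*b - 9*a^3, a - 4*a*b + 3*a*b^2 - 15*a^2 + 18*a^2*b + 27*a^3;
     -a + 4*a*b - 3*a*b^2 + 15*a^2 - 18*a^2*b - 27*a^3, -b + 4*b^2 - 3*b^3 - 5*a + 21*a*b - 19*a*b^2 + 19*a^2 - 33*a^2*b - 9*a^3, -b^2 + 2*b^3 - 4*a*b + 11*a*b^2 + 4*a^2 + 12*a^2*b - 9*a^3, -a*b + 2*a*b^2 - 5*a^2 + 12*a^2*b + 18*a^3;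
     a*b - 2*a*b^2 + 5*a^2 - 12*a^2*b - 18*a^3, b^2 - 2*b^3 - a + 8*a*b - 13*a*b^2 + 10*a^2 - 24*a^2*b - 9*a^3, b^3 - a*b + 5*a*b^2 + a^2 + 3*a^2*b - 9*a^3, a*b^2 - a^2 + 6*a^2*b + 9*a^3]

set_option maxHeartbeats 1000000 in
def H8 (a b : ℤ) : Matrix (Fin 4) (Fin 4) ℤ :=
  !![1 - 36*a + 56*a*b - 35*a*b^2 + 6*a*b^3 + 203*a^2 - 222*a^2*b + 54*a^2*b^2 - 351*a^3 + 162*a^3*b + 162*a^4, 8 - 36*b + 56*b^2 - 35*b^3 + 6*b^4 - 84*a + 273*a*b - 243*a*b^2 + 55*a*b^3 + 231*a^2 - 479*a^2*b + 171*a^2*b^2 - 195*a^3 + 189*a^3*b + 27*a^4, 8*b - 21*b^2 + 20*b^3 - 5*b^4 - 7*a - 68*a*b + 120*a*b^2 - 44*a*b^3 + 55*a^2 + 148*a^2*b - 126*a^2*b^2 - 96*a^3 - 108*a^3*b + 27*a^4, 8*a - 21*a*b + 20*a*b^2 - 5*a*b^3 - 83*a^2 + 130*a^2*b - 45*a^2*b^2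 + 210*a^3 - 135*a^3*b - 135*a^4;
     -8*a + 21*a*b - 20*a*b^2 + 5*a*b^3 + 83*a^2 - 130*a^2*b + 45*a^2*b^2 - 210*a^3 + 135*a^3*b + 135*a^4, 1 - 8*b + 21*b^2 - 20*b^3 + 5*b^4 - 28*a + 118*a*b - 145*a*b^2 + 46*a*b^3 + 120*a^2 - 302*a^2*b + 144*a^2*b^2 - 141*a^3 + 162*a^3*b + 27*a^4, b - 6*b^2 + 10*b^3 - 4*b^4 - a - 23*a*b + 62*a*b^2 - 35*a*b^3 + 21*a^2 + 76*a^2*b - 99*a^2*b^2 - 60*a^3 - 81*a^3*b + 27*a^4, a - 6*a*b + 10*a*b^2 - 4*a*b^3 - 28*a^2 + 68*a^2*b - 36*a^2*b^2 + 114*a^3 - 108*a^3*b - 108*a^4;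
     -a + 6*a*b - 10*a*b^2 + 4*a*b^3 + 28*a^2 - 68*a^2*b + 36*a^2*b^2 - 114*a^3 + 108*a^3*b + 108*a^4, -b + 6*b^2 - 10*b^3 + 4*b^4 - 7*a + 43*a*b - 78*a*b^2 + 37*a*b^3 + 55*a^2 - 176*a^2*b + 117*a^2*b^2 - 96*a^3 + 135*a^3*b + 27*a^4, -b^2 + 4*b^3 - 3*b^4 - 6*a*b + 27*a*b^2 - 26*a*b^3 + 6*a^2 + 34*a^2*b - 72*a^2*b^2 - 33*a^3 - 54*a^3*b + 27*a^4, -a*b + 4*a*b^2 - 3*a*b^3 - 7*a^2 + 30*a^2*b - 27*a^2*b^2 + 54*a^3 - 81*a^3*b - 81*a^4;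
     a*b - 4*a*b^2 + 3*a*b^3 + 7*a^2 - 30*a^2*b + 27*a^2*b^2 - 54*a^3 + 81*a^3*b + 81*a^4, b^2 - 4*b^3 + 3*b^4 - a + 12*a*b - 36*a*b^2 + 28*a*b^3 + 21*a^2 - 92*a^2*b + 90*a^2*b^2 - 60*a^3 + 108*a^3*b + 27*a^4, b^3 - 2*b^4 - a*b + 9*a*b^2 - 17*a*b^3 + a^2 + 13*a^2*b - 45*a^2*b^2 - 15*a^3 - 27*a^3*b + 27*a^4, a*b^2 - 2*a*b^3 - a^2 + 10*a^2*b - 18*a^2*b^2 + 21*a^3 - 54*a^3*b - 54*a^4]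

def Hm (a b : ℤ) : Matrix (Fin 4) (Fin 4) ℤ :=
  !![-1 + a, -1 + b, -b, -a;
     a, -1 + b, -b, -a;
     a, b, -b, -a;
     a, b, 1 - b, -a]

def Umat (a b : ℤ) : Matrix (Fin 4) (Fin 4) ℤ :=
  !![-1 + 2*a, -2 + 2*b, -2*b, -2*a;
     2*a, -1 + 2*b, -2*b, -2*a;
     2*a, 2*b, 1 - 2*b, -2*a;
     2*a, 2*b, 2 - 2*b, 1 - 2*a]

def Vmat (a b : ℤ) : Matrix (Fin 4) (Fin 4) ℤ :=
  !![2*a*b - 2*a^2, 1 - 4*b + 2*b^2 + 3*a - 2*a*b, b - 2*b^2 - a + 2*a*b, a - 2*a*b + 2*a^2;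
     -a + 2*a*b - 2*a^2, -b + 2*b^2 + a - 2*a*b, -2*b^2 + a + 2*a*b, -2*a*b + 2*a^2;
     2*a*b - 2*a^2, 2*b^2 - a - 2*a*b, b - 2*b^2 - a + 2*a*b, a - 2*a*b + 2*a^2;
     -a + 2*a*b - 2*a^2, -b + 2*b^2 + a - 2*a*b, -1 + 4*b - 2*b^2 - 3*a + 2*a*b, -2*a*b + 2*a^2]


def Dm (a : ℤ) : Matrix (Fin 4) (Fin 4) ℤ :=
  !![a^2,0,0,0; 0,a^2,0,0; 0,0,a^2,0; 0,0,0,a^2]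

lemma smulDm (a : ℤ) : (a^2) • (1 : Matrix (Fin 4) (Fin 4) ℤ) = Dm a := by
  ext i j
  fin_cases i <;> fin_cases j <;>
    simp only [Dm, Matrix.smul_apply, Matrix.one_apply, smul_eq_mul, Matrix.cons_val',
      Matrix.cons_val_zero, Matrix.cons_val_one, Matrix.head_cons, Matrix.head_fin_const,
      Matrix.empty_val', Matrix.cons_val_fin_one, Matrix.of_apply, Fin.isValue] <;>
    norm_num [Matrix.one_apply, Matrix.vecHead, Matrix.vecTail, Fin.ext_iff]

section Aux
variable (a b : ℤ)

lemma hHm : Gamma a b - 1 = Hm a b := by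
  ext i j
  fin_cases i <;> fin_cases j <;>
    simp [Gamma, Hm, Matrix.sub_apply, Matrix.one_apply, Matrix.vecHead, Matrix.vecTail] <;> ring

lemma pow2G : Gamma a b ^ 2 = G2 a b := by
  rw [sq]; ext i j
  fin_cases i <;> fin_cases j <;>
    simp [Gamma, G2, Matrix.mul_apply, Fin.sum_univ_four, Matrix.vecHead, Matrix.vecTail] <;> ring

lemma pow4G : Gamma a b ^ 4 = G4 a b := by
  have h : Gamma a b ^ 4 = Gamma a b ^ 2 * Gamma a b ^ 2 := by rw [← pow_add]
  rw [h, pow2G]; ext i j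
  fin_cases i <;> fin_cases j <;>
    simp [G2, G4, Matrix.mul_apply, Fin.sum_univ_four, Matrix.vecHead, Matrix.vecTail] <;> ring

set_option maxHeartbeats 1000000 in
lemma pow6G : Gamma a b ^ 6 = G6 a b := by
  rw [show (6:ℕ) = 4 + 2 from rfl, pow_add, pow4G, pow2G]; ext i j
  fin_cases i <;> fin_cases j <;>
    simp [G2, G4, G6, Matrix.mul_apply, Fin.sum_univ_four, Matrix.vecHead, Matrix.vecTail] <;> ring

set_option maxHeartbeats 1600000 in
lemma pow8G : Gamma a b ^ 8 = G8 a b := by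
  rw [show (8:ℕ) = 4 + 4 from rfl, pow_add, pow4G]; ext i j
  fin_cases i <;> fin_cases j <;>
    simp [G4, G8, Matrix.mul_apply, Fin.sum_univ_four, Matrix.vecHead, Matrix.vecTail] <;> ring

lemma pow2H : (Gamma a b - 1) ^ 2 = H2 a b := by
  rw [hHm, sq]; ext i j
  fin_cases i <;> fin_cases j <;>
    simp [Hm, H2, Matrix.mul_apply, Fin.sum_univ_four, Matrix.vecHead, Matrix.vecTail] <;> ring

lemma pow4H : (Gamma a b - 1) ^ 4 = H4 a b := by
  have h : (Gamma a b - 1) ^ 4 = (Gamma a b - 1) ^ 2 * (Gamma a b - 1) ^ 2 := by rw [← pow_add]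
  rw [h, pow2H]; ext i j
  fin_cases i <;> fin_cases j <;>
    simp [H2, H4, Matrix.mul_apply, Fin.sum_univ_four, Matrix.vecHead, Matrix.vecTail] <;> ring

set_option maxHeartbeats 1000000 in
lemma pow6H : (Gamma a b - 1) ^ 6 = H6 a b := by
  rw [show (6:ℕ) = 4 + 2 from rfl, pow_add, pow4H, pow2H]; ext i j
  fin_cases i <;> fin_cases j <;>
    simp [H2, H4, H6, Matrix.mul_apply, Fin.sum_univ_four, Matrix.vecHead, Matrix.vecTail] <;> ring

set_option maxHeartbeats 1600000 in
lemma pow8H : (Gamma a b - 1) ^ 8 = H8 a b := by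
  rw [show (8:ℕ) = 4 + 4 from rfl, pow_add, pow4H]; ext i j
  fin_cases i <;> fin_cases j <;>
    simp [H4, H8, Matrix.mul_apply, Fin.sum_univ_four, Matrix.vecHead, Matrix.vecTail] <;> ring

set_option maxHeartbeats 1600000 in
lemma pG : Gamma a b ^ 8 + (-2 + 6*a + 2*b) • Gamma a b ^ 6
    + (1 - 4*a + 9*a^2 - 2*b + 6*a*b + b^2) • Gamma a b ^ 4
    + (2*a - 3*a^2 - 4*a*b - b^2) • Gamma a b ^ 2
    + (a^2) • (1 : Matrix (Fin 4) (Fin 4) ℤ) = 0 := by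
  rw [pow8G, pow6G, pow4G, pow2G, smulDm]; ext i j
  fin_cases i <;> fin_cases j <;>
    simp [G8, G6, G4, G2, Dm, Matrix.add_apply, Matrix.smul_apply,
      Matrix.zero_apply, smul_eq_mul, Matrix.vecHead, Matrix.vecTail] <;> ring

set_option maxHeartbeats 1600000 in
lemma pH : (Gamma a b - 1) ^ 8 + (-2 + 6*a + 2*b) • (Gamma a b - 1) ^ 6
    + (1 - 4*a + 9*a^2 - 2*b + 6*a*b + b^2) • (Gamma a b - 1) ^ 4
    + (2*a - 3*a^2 - 4*a*b - b^2) • (Gamma a b - 1) ^ 2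
    + (a^2) • (1 : Matrix (Fin 4) (Fin 4) ℤ) = 0 := by
  rw [pow8H, pow6H, pow4H, pow2H, smulDm]; ext i j
  fin_cases i <;> fin_cases j <;>
    simp [H8, H6, H4, H2, Dm, Matrix.add_apply, Matrix.smul_apply,
      Matrix.zero_apply, smul_eq_mul, Matrix.vecHead, Matrix.vecTail] <;> ring

lemma recM (M : Matrix (Fin 4) (Fin 4) ℤ)
    (h : M ^ 8 + (-2 + 6*a + 2*b) • M ^ 6 + (1 - 4*a + 9*a^2 - 2*b + 6*a*b + b^2) • M ^ 4
      + (2*a - 3*a^2 - 4*a*b - b^2) • M ^ 2 + (a^2) • (1 : Matrix (Fin 4) (Fin 4) ℤ) = 0)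
    (m : ℕ) :
    M ^ (m+8) = -((-2 + 6*a + 2*b) • M ^ (m+6) + (1 - 4*a + 9*a^2 - 2*b + 6*a*b + b^2) • M ^ (m+4)
      + (2*a - 3*a^2 - 4*a*b - b^2) • M ^ (m+2) + (a^2) • M ^ m) := by
  have h2 : M ^ (m+8) + (-2 + 6*a + 2*b) • M ^ (m+6)
      + (1 - 4*a + 9*a^2 - 2*b + 6*a*b + b^2) • M ^ (m+4)
      + (2*a - 3*a^2 - 4*a*b - b^2) • M ^ (m+2) + (a^2) • M ^ m
      = M ^ m * (M ^ 8 + (-2 + 6*a + 2*b) • M ^ 6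
        + (1 - 4*a + 9*a^2 - 2*b + 6*a*b + b^2) • M ^ 4
        + (2*a - 3*a^2 - 4*a*b - b^2) • M ^ 2 + (a^2) • (1 : Matrix (Fin 4) (Fin 4) ℤ)) := by
    rw [mul_add, mul_add, mul_add, mul_add, mul_smul_comm, mul_smul_comm, mul_smul_comm,
      mul_smul_comm, mul_one, ← pow_add, ← pow_add, ← pow_add, ← pow_add]
  rw [h, mul_zero] at h2
  have h3 : M ^ (m+8) + ((-2 + 6*a + 2*b) • M ^ (m+6)
      + (1 - 4*a + 9*a^2 - 2*b + 6*a*b + b^2) • M ^ (m+4)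
      + (2*a - 3*a^2 - 4*a*b - b^2) • M ^ (m+2) + (a^2) • M ^ m) = 0 := by
    rw [← h2]; abel
  exact eq_neg_of_add_eq_zero_left h3

lemma recB (m : ℕ) :
    B a b (m+8) = -((-2 + 6*a + 2*b) • B a b (m+6)
      + (1 - 4*a + 9*a^2 - 2*b + 6*a*b + b^2) • B a b (m+4)
      + (2*a - 3*a^2 - 4*a*b - b^2) • B a b (m+2) + (a^2) • B a b m) := by
  unfold B
  rw [recM a b _ (pG a b) m, recM a b _ (pH a b) m]
  simp only [smul_sub]
  abel

set_option maxHeartbeats 800000 in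
lemma base2 : B a b 2 = (1 : ℤ) • Umat a b + (0 : ℤ) • Vmat a b := by
  unfold B
  rw [pow2G, pow2H]; ext i j
  fin_cases i <;> fin_cases j <;>
    simp [G2, H2, Umat, Vmat, Matrix.sub_apply, Matrix.add_apply, Matrix.smul_apply,
      smul_eq_mul, Matrix.vecHead, Matrix.vecTail] <;> ring

set_option maxHeartbeats 800000 in
lemma base4 : B a b 4 = (1 - 8*a) • Umat a b + (-2 : ℤ) • Vmat a b := by
  unfold B
  rw [pow4G, pow4H]; ext i j
  fin_cases i <;> fin_cases j <;>
    simp [G4, H4, Umat, Vmat, Matrix.sub_apply, Matrix.add_apply, Matrix.smul_apply,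
      smul_eq_mul, Matrix.vecHead, Matrix.vecTail] <;> ring

set_option maxHeartbeats 800000 in
lemma base6 : B a b 6 = (1 - 19*a + 12*a*b + 36*a^2) • Umat a b
    + (-4 + 9*a + 3*b) • Vmat a b := by
  unfold B
  rw [pow6G, pow6H]; ext i j
  fin_cases i <;> fin_cases j <;>
    simp [G6, H6, Umat, Vmat, Matrix.sub_apply, Matrix.add_apply, Matrix.smul_apply,
      smul_eq_mul, Matrix.vecHead, Matrix.vecTail] <;> ring

end Aux

/-- For every even `n`, the greatest common divisor of the 16 entries of
`B(n)` equals `gcd(t(n), ζ(n))` where `ζ(n) = (s(n) + (5a−b)t(n))/2` (gcds of integers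
understood up to sign, via `Int.gcd` and the normalized `Finset.gcd`). -/
theorem gcd_entries_even (a b : ℤ)
    (s t : ℕ → ℤ)
    (hs_rec : ∀ n : ℕ, a ^ 2 * s n + (2 * a - 3 * a ^ 2 - 4 * a * b - b ^ 2) * s (n + 2)
      + (1 - 4 * a + 9 * a ^ 2 - 2 * b + 6 * a * b + b ^ 2) * s (n + 4)
      + (-2 + 6 * a + 2 * b) * s (n + 6) + s (n + 8) = 0)
    (ht_rec : ∀ n : ℕ, a ^ 2 * t n + (2 * a - 3 * a ^ 2 - 4 * a * b - b ^ 2) * t (n + 2)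
      + (1 - 4 * a + 9 * a ^ 2 - 2 * b + 6 * a * b + b ^ 2) * t (n + 4)
      + (-2 + 6 * a + 2 * b) * t (n + 6) + t (n + 8) = 0)
    (hs0 : s 0 = 0) (hs1 : s 1 = 2) (hs2 : s 2 = 2) (hs3 : s 3 = 2 - 9 * a - 3 * b)
    (hs4 : s 4 = 2 * (1 - 3 * a - b))
    (hs5 : s 5 = 2 - 25 * a + 45 * a ^ 2 - 5 * b + 30 * a * b + 5 * b ^ 2)
    (hs6 : s 6 = 2 - 18 * a + 27 * a ^ 2 - 4 * b + 18 * a * b + 3 * b ^ 2)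
    (hs7 : s 7 = 2 - 49 * a + 189 * a ^ 2 - 189 * a ^ 3 - 7 * b + 105 * a * b
      - 189 * a ^ 2 * b + 14 * b ^ 2 - 63 * a * b ^ 2 - 7 * b ^ 3)
    (ht0 : t 0 = 0) (ht1 : t 1 = 0) (ht2 : t 2 = 0) (ht3 : t 3 = -3) (ht4 : t 4 = -2)
    (ht5 : t 5 = 5 * (-1 + 3 * a + b)) (ht6 : t 6 = -4 + 9 * a + 3 * b)
    (ht7 : t 7 = -7 * (1 - 7 * a + 9 * a ^ 2 - 2 * b + 6 * a * b + b ^ 2))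
    (n : ℕ) (hn : Even n)
    (ζ : ℤ) (hζ : ζ = (s n + (5 * a - b) * t n) / 2) :
    (Finset.univ.gcd fun p : Fin 4 × Fin 4 => B a b n p.1 p.2)
      = (Int.gcd (t n) ζ : ℤ) := by
  
  obtain ⟨k, hk⟩ := hn
  have hs' : ∀ m, s (m+8) = -((-2 + 6*a + 2*b) * s (m+6)
      + (1 - 4*a + 9*a^2 - 2*b + 6*a*b + b^2) * s (m+4)
      + (2*a - 3*a^2 - 4*a*b - b^2) * s (m+2) + a^2 * s m) :=
    fun m => by linear_combination hs_rec m
  have ht' : ∀ m, t (m+8) = -((-2 + 6*a + 2*b) * t (m+6)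
      + (1 - 4*a + 9*a^2 - 2*b + 6*a*b + b^2) * t (m+4)
      + (2*a - 3*a^2 - 4*a*b - b^2) * t (m+2) + a^2 * t m) :=
    fun m => by linear_combination ht_rec m
  have main : ∀ j : ℕ,
      (∃ z, s (2*j) + (5*a - b) * t (2*j) = 2*z ∧
        B a b (2*j) = z • Umat a b + t (2*j) • Vmat a b) ∧
      (∃ z, s (2*j+2) + (5*a - b) * t (2*j+2) = 2*z ∧
        B a b (2*j+2) = z • Umat a b + t (2*j+2) • Vmat a b) ∧
      (∃ z, s (2*j+4) + (5*a - b) * t (2*j+4) = 2*z ∧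
        B a b (2*j+4) = z • Umat a b + t (2*j+4) • Vmat a b) ∧
      (∃ z, s (2*j+6) + (5*a - b) * t (2*j+6) = 2*z ∧
        B a b (2*j+6) = z • Umat a b + t (2*j+6) • Vmat a b) := by
    intro j
    induction j with
    | zero =>
      simp only [Nat.mul_zero, Nat.zero_add]
      refine ⟨⟨0, by rw [hs0, ht0]; ring, ?_⟩, ⟨1, by rw [hs2, ht2]; ring, ?_⟩,
        ⟨1 - 8*a, by rw [hs4, ht4]; ring, ?_⟩,
        ⟨1 - 19*a + 12*a*b + 36*a^2, by rw [hs6, ht6]; ring, ?_⟩⟩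
      · simp [B, ht0]
      · rw [ht2]; exact base2 a b
      · rw [ht4]; exact base4 a b
      · rw [ht6]; exact base6 a b
    | succ j ih =>
      obtain ⟨⟨z0, hz0, hB0⟩, ⟨z1, hz1, hB1⟩, ⟨z2, hz2, hB2⟩, ⟨z3, hz3, hB3⟩⟩ := ih
      have e1 : 2*(j+1) = 2*j+2 := by ring
      have e2 : 2*j+2+2 = 2*j+4 := by omega
      have e3 : 2*j+2+4 = 2*j+6 := by omega
      have e4 : 2*j+2+6 = 2*j+8 := by omega
      rw [e1, e2, e3, e4]
      refine ⟨⟨z1, hz1, hB1⟩, ⟨z2, hz2, hB2⟩, ⟨z3, hz3, hB3⟩,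
        ⟨-((-2 + 6*a + 2*b) * z3 + (1 - 4*a + 9*a^2 - 2*b + 6*a*b + b^2) * z2
          + (2*a - 3*a^2 - 4*a*b - b^2) * z1 + a^2 * z0), ?_, ?_⟩⟩
      · rw [hs' (2*j), ht' (2*j)]
        linear_combination (-(-2 + 6*a + 2*b)) * hz3
          + (-(1 - 4*a + 9*a^2 - 2*b + 6*a*b + b^2)) * hz2
          + (-(2*a - 3*a^2 - 4*a*b - b^2)) * hz1 + (-(a^2)) * hz0
      · rw [recB a b (2*j), hB0, hB1, hB2, hB3, ht' (2*j)]
        module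
  obtain ⟨z, hz, hBn⟩ : ∃ z, s n + (5*a - b) * t n = 2*z ∧
      B a b n = z • Umat a b + t n • Vmat a b := by
    have hn2 : n = 2*k := by omega
    rw [hn2]; exact (main k).1
  have hζz : ζ = z := by
    rw [hζ, hz, Int.mul_ediv_cancel_left _ two_ne_zero]
  have hent : ∀ i j : Fin 4, B a b n i j = z * Umat a b i j + t n * Vmat a b i j := by
    intro i j
    rw [hBn]
    simp only [Matrix.add_apply, Matrix.smul_apply, smul_eq_mul]
  have hd : ∀ p : Fin 4 × Fin 4,
      (Finset.univ.gcd fun p : Fin 4 × Fin 4 => B a b n p.1 p.2) ∣ B a b n p.1 p.2 :=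
    fun p => Finset.gcd_dvd (Finset.mem_univ p)
  set g := Finset.univ.gcd fun p : Fin 4 × Fin 4 => B a b n p.1 p.2 with hgdef
  have hgz : g ∣ z := by
    have e : z = B a b n 2 0 - B a b n 0 0 := by
      rw [hent 2 0, hent 0 0]
      simp [Umat, Vmat, Matrix.vecHead, Matrix.vecTail]
      ring
    rw [e]; exact dvd_sub (hd (2,0)) (hd (0,0))
  have hgt : g ∣ t n := by
    have e : t n = 3 * B a b n 2 1 - B a b n 1 1 + B a b n 2 2 - B a b n 3 2
        + 4 * B a b n 2 0 - 4 * B a b n 1 0 - 2 * B a b n 3 1 := by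
      rw [hent 2 1, hent 1 1, hent 2 2, hent 3 2, hent 2 0, hent 1 0, hent 3 1]
      simp [Umat, Vmat, Matrix.vecHead, Matrix.vecTail]
      ring
    rw [e]
    exact dvd_sub (dvd_sub (dvd_add (dvd_sub (dvd_add (dvd_sub
      (Dvd.dvd.mul_left (hd (2,1)) 3) (hd (1,1))) (hd (2,2))) (hd (3,2)))
      (Dvd.dvd.mul_left (hd (2,0)) 4)) (Dvd.dvd.mul_left (hd (1,0)) 4))
      (Dvd.dvd.mul_left (hd (3,1)) 2)
  have h1 : ((Int.gcd (t n) ζ : ℤ)) ∣ g := by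
    apply Finset.dvd_gcd
    intro p _
    rw [hent p.1 p.2, hζz]
    exact dvd_add (Dvd.dvd.mul_right (Int.gcd_dvd_right _ _) _)
      (Dvd.dvd.mul_right (Int.gcd_dvd_left _ _) _)
  have h2 : g ∣ (Int.gcd (t n) ζ : ℤ) := by
    rw [hζz]
    exact Int.dvd_coe_gcd hgt hgz
  have hgnn : 0 ≤ g := Int.nonneg_of_normalize_eq_self (Finset.normalize_gcd)
  exact Int.dvd_antisymm hgnn (Int.natCast_nonneg _) h2 h1
end

section
/- For every even natural number n, 16·det(B(n)) = (1 + 4a − 4b)·(s(n)² + (4a − (3a+b)²)·t(n)²)²; equivalently, det(B(n)) = k·μ(n)² where k = 1 + 4a − 4b and μ(n) = (s(n)² + (4a − (3a+b)²)·t(n)²)/4. -/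
open Matrix

set_option maxHeartbeats 1000000

/-- `W = Γ − Γ²`. -/
def Wm (a b : ℤ) : Matrix (Fin 4) (Fin 4) ℤ :=
  !![2*a, -1+a+2*b, a-b, -a;
     a, a+b, a, 0;
     0, a, a+b, a;
     -a, a-b, -1+a+2*b, 2*a]

/-- `Q = 2Γ − 1`. -/
def Qm (a b : ℤ) : Matrix (Fin 4) (Fin 4) ℤ :=
  !![-1 + 2*a, -2 + 2*b, -2*b, -2*a;
     2*a, -1 + 2*b, -2*b, -2*a;
     2*a, 2*b, 1 - 2*b, -2*a;
     2*a, 2*b, 2 - 2*b, 1 - 2*a]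

/-- `XY x y = x•I + y•W`. -/
def XY (a b x y : ℤ) : Matrix (Fin 4) (Fin 4) ℤ :=
  !![x + 2*a*y, -y + 2*b*y + a*y, -b*y + a*y, -a*y;
     a*y, x + b*y + a*y, a*y, 0;
     0, a*y, x + b*y + a*y, a*y;
     -a*y, -b*y + a*y, -y + 2*b*y + a*y, x + 2*a*y]

lemma hGG (a b : ℤ) : Gamma a b * Gamma a b = Gamma a b - Wm a b := by
  ext i j
  fin_cases i <;> fin_cases j <;>
    simp [Gamma, Wm, Matrix.mul_apply, Fin.sum_univ_four, Matrix.vecHead, Matrix.vecTail] <;>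
    ring

lemma hOO (a b : ℤ) :
    (1 - Gamma a b) * (1 - Gamma a b) = (1 - Gamma a b) - Wm a b := by
  have h : (1 - Gamma a b) * (1 - Gamma a b)
      = (1 - Gamma a b) - (Gamma a b - Gamma a b * Gamma a b) := by
    rw [mul_sub, mul_one, sub_mul, one_mul]
  rw [h, hGG]
  abel

lemma hQ (a b : ℤ) : Qm a b = Gamma a b + Gamma a b - 1 := by
  ext i j
  fin_cases i <;> fin_cases j <;>
    simp [Gamma, Qm, Matrix.vecHead, Matrix.vecTail, Matrix.one_apply] <;> ring

lemma hXY0 (a b : ℤ) : XY a b 0 0 = 0 := by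
  ext i j
  fin_cases i <;> fin_cases j <;>
    simp [XY, Matrix.vecHead, Matrix.vecTail]

lemma hXY1 (a b : ℤ) : XY a b 1 0 = 1 := by
  ext i j
  fin_cases i <;> fin_cases j <;>
    simp [XY, Matrix.vecHead, Matrix.vecTail, Matrix.one_apply]

lemma hXYsub (a b x y u v : ℤ) :
    XY a b x y - XY a b u v = XY a b (x - u) (y - v) := by
  ext i j
  fin_cases i <;> fin_cases j <;>
    simp [XY, Matrix.vecHead, Matrix.vecTail] <;> ring

lemma hXYW (a b x y : ℤ) :
    XY a b x y * Wm a b = XY a b (-(a*y)) (x + (3*a+b)*y) := by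
  ext i j
  fin_cases i <;> fin_cases j <;>
    simp [XY, Wm, Matrix.mul_apply, Fin.sum_univ_four, Matrix.vecHead, Matrix.vecTail] <;> ring

lemma detQ (a b : ℤ) : (Qm a b).det = 1 + 4*a - 4*b := by
  rw [Matrix.det_succ_row_zero]
  simp [Fin.sum_univ_succ, Matrix.det_fin_three, Matrix.submatrix_apply,
    Fin.succAbove, Matrix.vecHead, Matrix.vecTail, Qm,
    show (Fin.castSucc 2 : Fin 4) = 2 from rfl, show (Fin.castSucc 1 : Fin 4) = 1 from rfl,
    show (Fin.castSucc 0 : Fin 4) = 0 from rfl]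
  ring

lemma detXY (a b x y : ℤ) :
    (XY a b x y).det = (x^2 + (3*a+b)*x*y + a*y^2)^2 := by
  rw [Matrix.det_succ_row_zero]
  simp [Fin.sum_univ_succ, Matrix.det_fin_three, Matrix.submatrix_apply,
    Fin.succAbove, Matrix.vecHead, Matrix.vecTail, XY,
    show (Fin.castSucc 2 : Fin 4) = 2 from rfl, show (Fin.castSucc 1 : Fin 4) = 1 from rfl,
    show (Fin.castSucc 0 : Fin 4) = 0 from rfl]
  ring

/-- coefficient sequences `(α(n), β(n))` with `Γⁿ − (1−Γ)ⁿ = (2Γ−1)(α·I+β·W)`. -/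
def ab2 (a b : ℤ) : ℕ → ℤ × ℤ
  | 0 => (0, 0)
  | 1 => (1, 0)
  | n + 2 => ((ab2 a b (n+1)).1 + a * (ab2 a b n).2,
              (ab2 a b (n+1)).2 - (ab2 a b n).1 - (3*a+b) * (ab2 a b n).2)

lemma ab2_zero (a b : ℤ) : ab2 a b 0 = (0, 0) := rfl
lemma ab2_one (a b : ℤ) : ab2 a b 1 = (1, 0) := rfl
lemma ab2_succ (a b : ℤ) (n : ℕ) :
    ab2 a b (n+2) = ((ab2 a b (n+1)).1 + a * (ab2 a b n).2,
      (ab2 a b (n+1)).2 - (ab2 a b n).1 - (3*a+b) * (ab2 a b n).2) := rfl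

lemma ab2_two (a b : ℤ) : ab2 a b 2 = (1, 0) := by
  rw [show (2:ℕ) = 0+2 from rfl, ab2_succ]
  norm_num [ab2_zero, ab2_one]

lemma ab2_three (a b : ℤ) : ab2 a b 3 = (1, -1) := by
  rw [show (3:ℕ) = 1+2 from rfl, ab2_succ]
  norm_num [ab2_one, ab2_two]

lemma ab2_four (a b : ℤ) : ab2 a b 4 = (1, -2) := by
  rw [show (4:ℕ) = 2+2 from rfl, ab2_succ]
  norm_num [ab2_two, ab2_three]

lemma ab2_five (a b : ℤ) : ab2 a b 5 = (1 - a, 3*a + b - 3) := by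
  rw [show (5:ℕ) = 3+2 from rfl, ab2_succ]
  rw [ab2_three, ab2_four]
  refine Prod.ext ?_ ?_ <;> norm_num <;> ring

lemma ab2_six (a b : ℤ) : ab2 a b 6 = (1 - 3*a, 9*a + 3*b - 4) := by
  rw [show (6:ℕ) = 4+2 from rfl, ab2_succ]
  rw [ab2_four, ab2_five]
  refine Prod.ext ?_ ?_ <;> norm_num <;> ring

lemma keyIdent (a b : ℤ) : ∀ n : ℕ,
    Gamma a b ^ n - (1 - Gamma a b) ^ n
      = Qm a b * XY a b (ab2 a b n).1 (ab2 a b n).2 := by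
  have main : ∀ n : ℕ,
      (Gamma a b ^ n - (1 - Gamma a b) ^ n
        = Qm a b * XY a b (ab2 a b n).1 (ab2 a b n).2) ∧
      (Gamma a b ^ (n+1) - (1 - Gamma a b) ^ (n+1)
        = Qm a b * XY a b (ab2 a b (n+1)).1 (ab2 a b (n+1)).2) := by
    intro n
    induction n with
    | zero =>
      constructor
      · show Gamma a b ^ 0 - (1 - Gamma a b) ^ 0 = Qm a b * XY a b 0 0
        rw [pow_zero, pow_zero, hXY0, mul_zero, sub_self]
      · show Gamma a b ^ 1 - (1 - Gamma a b) ^ 1 = Qm a b * XY a b 1 0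
        rw [pow_one, pow_one, hXY1, mul_one, hQ]
        abel
    | succ n ih =>
      refine ⟨ih.2, ?_⟩
      have e1 : Gamma a b ^ (n+2) = Gamma a b ^ n * (Gamma a b * Gamma a b) := by
        rw [pow_succ, pow_succ, mul_assoc]
      have e2 : (1 - Gamma a b) ^ (n+2)
          = (1 - Gamma a b) ^ n * ((1 - Gamma a b) * (1 - Gamma a b)) := by
        rw [pow_succ, pow_succ, mul_assoc]
      have e3 : Gamma a b ^ (n+2) - (1 - Gamma a b) ^ (n+2)
          = (Gamma a b ^ (n+1) - (1 - Gamma a b) ^ (n+1))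
            - (Gamma a b ^ n - (1 - Gamma a b) ^ n) * Wm a b := by
        rw [e1, e2, hGG, hOO, pow_succ, pow_succ]
        noncomm_ring
      show Gamma a b ^ (n+2) - (1 - Gamma a b) ^ (n+2)
          = Qm a b * XY a b (ab2 a b (n+2)).1 (ab2 a b (n+2)).2
      rw [e3, ih.1, ih.2, mul_assoc, hXYW, ← mul_sub, hXYsub]
      have c1 : (ab2 a b (n+1)).1 - -(a * (ab2 a b n).2) = (ab2 a b (n+2)).1 := by
        rw [ab2_succ]; ring
      have c2 : (ab2 a b (n+1)).2 - ((ab2 a b n).1 + (3*a+b) * (ab2 a b n).2)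
          = (ab2 a b (n+2)).2 := by
        rw [ab2_succ]; ring
      rw [c1, c2]
  exact fun n => (main n).1

lemma ab2_step1 (a b : ℤ) (n : ℕ) :
    (ab2 a b (n+2)).1 = (ab2 a b (n+1)).1 + a * (ab2 a b n).2 := rfl

lemma ab2_step2 (a b : ℤ) (n : ℕ) :
    (ab2 a b (n+2)).2 = (ab2 a b (n+1)).2 - (ab2 a b n).1 - (3*a+b) * (ab2 a b n).2 := rfl

lemma ab2_rec4_1 (a b : ℤ) (n : ℕ) :
    (ab2 a b (n+4)).1 = 2*(ab2 a b (n+3)).1 - (3*a+b+1)*(ab2 a b (n+2)).1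
      + (3*a+b)*(ab2 a b (n+1)).1 - a*(ab2 a b n).1 := by
  have h2 := ab2_step1 a b n
  have h3 := ab2_step1 a b (n+1)
  have h4 := ab2_step1 a b (n+2)
  have k2 := ab2_step2 a b n
  have k3 := ab2_step2 a b (n+1)
  have k4 := ab2_step2 a b (n+2)
  simp only [show n+1+1 = n+2 from rfl, show n+1+2 = n+3 from rfl,
    show n+2+2 = n+4 from rfl, show n+2+1 = n+3 from rfl] at h2 h3 h4 k2 k3 k4
  simp only [h4, h3, h2, k4, k3, k2]
  ring

lemma ab2_rec4_2 (a b : ℤ) (n : ℕ) :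
    (ab2 a b (n+4)).2 = 2*(ab2 a b (n+3)).2 - (3*a+b+1)*(ab2 a b (n+2)).2
      + (3*a+b)*(ab2 a b (n+1)).2 - a*(ab2 a b n).2 := by
  have h2 := ab2_step1 a b n
  have h3 := ab2_step1 a b (n+1)
  have h4 := ab2_step1 a b (n+2)
  have k2 := ab2_step2 a b n
  have k3 := ab2_step2 a b (n+1)
  have k4 := ab2_step2 a b (n+2)
  simp only [show n+1+1 = n+2 from rfl, show n+1+2 = n+3 from rfl,
    show n+2+2 = n+4 from rfl, show n+2+1 = n+3 from rfl] at h2 h3 h4 k2 k3 k4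
  simp only [h4, h3, h2, k4, k3, k2]
  ring

/-- if a sequence satisfies the order-4 recurrence (char. poly of `Γ`), it satisfies
the order-8 step-2 recurrence. -/
lemma rec4_to_rec8 (a b : ℤ) (f : ℕ → ℤ)
    (h : ∀ n, f (n+4) = 2*f (n+3) - (3*a+b+1)*f (n+2) + (3*a+b)*f (n+1) - a*f n) :
    ∀ n, a ^ 2 * f n + (2 * a - 3 * a ^ 2 - 4 * a * b - b ^ 2) * f (n + 2)
      + (1 - 4 * a + 9 * a ^ 2 - 2 * b + 6 * a * b + b ^ 2) * f (n + 4)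
      + (-2 + 6 * a + 2 * b) * f (n + 6) + f (n + 8) = 0 := by
  intro n
  have h0 := h n
  have h1 := h (n+1)
  have h2 := h (n+2)
  have h3 := h (n+3)
  have h4 := h (n+4)
  simp only [show n+1+4 = n+5 by omega, show n+1+3 = n+4 by omega,
    show n+1+2 = n+3 by omega, show n+1+1 = n+2 by omega,
    show n+2+4 = n+6 by omega, show n+2+3 = n+5 by omega,
    show n+2+2 = n+4 by omega, show n+2+1 = n+3 by omega,
    show n+3+4 = n+7 by omega, show n+3+3 = n+6 by omega,
    show n+3+2 = n+5 by omega, show n+3+1 = n+4 by omega,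
    show n+4+4 = n+8 by omega, show n+4+3 = n+7 by omega,
    show n+4+2 = n+6 by omega, show n+4+1 = n+5 by omega] at h0 h1 h2 h3 h4
  linear_combination (a : ℤ) * h0 + (3*a+b) * h1 + (3*a+b+1) * h2 + 2 * h3 + h4

lemma evenUnique (a b : ℤ) (f g : ℕ → ℤ)
    (hf : ∀ n, a ^ 2 * f n + (2 * a - 3 * a ^ 2 - 4 * a * b - b ^ 2) * f (n + 2)
      + (1 - 4 * a + 9 * a ^ 2 - 2 * b + 6 * a * b + b ^ 2) * f (n + 4)
      + (-2 + 6 * a + 2 * b) * f (n + 6) + f (n + 8) = 0)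
    (hg : ∀ n, a ^ 2 * g n + (2 * a - 3 * a ^ 2 - 4 * a * b - b ^ 2) * g (n + 2)
      + (1 - 4 * a + 9 * a ^ 2 - 2 * b + 6 * a * b + b ^ 2) * g (n + 4)
      + (-2 + 6 * a + 2 * b) * g (n + 6) + g (n + 8) = 0)
    (h0 : f 0 = g 0) (h2 : f 2 = g 2) (h4 : f 4 = g 4) (h6 : f 6 = g 6) :
    ∀ m, f (2*m) = g (2*m) := by
  have main : ∀ m, f (2*m) = g (2*m) ∧ f (2*m+2) = g (2*m+2) ∧
      f (2*m+4) = g (2*m+4) ∧ f (2*m+6) = g (2*m+6) := by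
    intro m
    induction m with
    | zero => exact ⟨h0, h2, h4, h6⟩
    | succ m ih =>
      obtain ⟨i0, i2, i4, i6⟩ := ih
      have e : 2*(m+1) = 2*m+2 := by ring
      rw [e]
      simp only [show 2*m+2+2 = 2*m+4 from rfl, show 2*m+2+4 = 2*m+6 from rfl,
        show 2*m+2+6 = 2*m+8 from rfl]
      refine ⟨i2, i4, i6, ?_⟩
      linear_combination hf (2*m) - hg (2*m) - a^2 * i0
        - (2 * a - 3 * a ^ 2 - 4 * a * b - b ^ 2) * i2
        - (1 - 4 * a + 9 * a ^ 2 - 2 * b + 6 * a * b + b ^ 2) * i4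
        - (-2 + 6 * a + 2 * b) * i6
  exact fun m => (main m).1

/-- For every even `n`,
`16·det(B(n)) = (1 + 4a − 4b)·(s(n)² + (4a − (3a+b)²)·t(n)²)²`; equivalently
`det(B(n)) = k·μ(n)²` with `k = 1 + 4a − 4b` and
`μ(n) = (s(n)² + (4a − (3a+b)²)·t(n)²)/4`. -/
theorem det_B_even (a b : ℤ)
    (s t : ℕ → ℤ)
    (hs_rec : ∀ n : ℕ, a ^ 2 * s n + (2 * a - 3 * a ^ 2 - 4 * a * b - b ^ 2) * s (n + 2)
      + (1 - 4 * a + 9 * a ^ 2 - 2 * b + 6 * a * b + b ^ 2) * s (n + 4)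
      + (-2 + 6 * a + 2 * b) * s (n + 6) + s (n + 8) = 0)
    (ht_rec : ∀ n : ℕ, a ^ 2 * t n + (2 * a - 3 * a ^ 2 - 4 * a * b - b ^ 2) * t (n + 2)
      + (1 - 4 * a + 9 * a ^ 2 - 2 * b + 6 * a * b + b ^ 2) * t (n + 4)
      + (-2 + 6 * a + 2 * b) * t (n + 6) + t (n + 8) = 0)
    (hs0 : s 0 = 0) (hs1 : s 1 = 2) (hs2 : s 2 = 2) (hs3 : s 3 = 2 - 9 * a - 3 * b)
    (hs4 : s 4 = 2 * (1 - 3 * a - b))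
    (hs5 : s 5 = 2 - 25 * a + 45 * a ^ 2 - 5 * b + 30 * a * b + 5 * b ^ 2)
    (hs6 : s 6 = 2 - 18 * a + 27 * a ^ 2 - 4 * b + 18 * a * b + 3 * b ^ 2)
    (hs7 : s 7 = 2 - 49 * a + 189 * a ^ 2 - 189 * a ^ 3 - 7 * b + 105 * a * b
      - 189 * a ^ 2 * b + 14 * b ^ 2 - 63 * a * b ^ 2 - 7 * b ^ 3)
    (ht0 : t 0 = 0) (ht1 : t 1 = 0) (ht2 : t 2 = 0) (ht3 : t 3 = -3) (ht4 : t 4 = -2)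
    (ht5 : t 5 = 5 * (-1 + 3 * a + b)) (ht6 : t 6 = -4 + 9 * a + 3 * b)
    (ht7 : t 7 = -7 * (1 - 7 * a + 9 * a ^ 2 - 2 * b + 6 * a * b + b ^ 2))
    (n : ℕ) (hn : Even n)
    (μ : ℤ) (hμ : μ = (s n ^ 2 + (4 * a - (3 * a + b) ^ 2) * t n ^ 2) / 4) :
    16 * (B a b n).det
      = (1 + 4 * a - 4 * b) * (s n ^ 2 + (4 * a - (3 * a + b) ^ 2) * t n ^ 2) ^ 2 ∧
    (B a b n).det = (1 + 4 * a - 4 * b) * μ ^ 2 := by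
  obtain ⟨m, hm⟩ := hn
  have hn2 : n = 2*m := by omega
  subst hn2
  -- the model sequences
  set σ : ℕ → ℤ := fun k => 2*(ab2 a b k).1 + (3*a+b)*(ab2 a b k).2 with hσ
  set τ : ℕ → ℤ := fun k => (ab2 a b k).2 with hτ
  have hσ4 : ∀ k, σ (k+4) = 2*σ (k+3) - (3*a+b+1)*σ (k+2) + (3*a+b)*σ (k+1) - a*σ k := by
    intro k
    simp only [hσ]
    rw [ab2_rec4_1 a b k, ab2_rec4_2 a b k]
    ring
  have hτ4 : ∀ k, τ (k+4) = 2*τ (k+3) - (3*a+b+1)*τ (k+2) + (3*a+b)*τ (k+1) - a*τ k := by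
    intro k
    simp only [hτ]
    rw [ab2_rec4_2 a b k]
  have hσ8 := rec4_to_rec8 a b σ hσ4
  have hτ8 := rec4_to_rec8 a b τ hτ4
  have hs_eq : s (2*m) = σ (2*m) := by
    refine evenUnique a b s σ hs_rec hσ8 ?_ ?_ ?_ ?_ m
    · simp only [hσ, ab2_zero, hs0]; norm_num
    · simp only [hσ, ab2_two, hs2]; norm_num
    · simp only [hσ, ab2_four, hs4]; ring
    · simp only [hσ, ab2_six, hs6]; ring
  have ht_eq : t (2*m) = τ (2*m) := by
    refine evenUnique a b t τ ht_rec hτ8 ?_ ?_ ?_ ?_ m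
    · simp only [hτ, ab2_zero, ht0]
    · simp only [hτ, ab2_two, ht2]
    · simp only [hτ, ab2_four, ht4]
    · simp only [hτ, ab2_six, ht6]; ring
  -- the matrix structure
  have hBR : B a b (2*m) = Qm a b * XY a b (ab2 a b (2*m)).1 (ab2 a b (2*m)).2 := by
    have hpow : (Gamma a b - 1) ^ (2*m) = (1 - Gamma a b) ^ (2*m) := by
      rw [show Gamma a b - 1 = -(1 - Gamma a b) from by abel]
      exact (even_two_mul m).neg_pow _
    rw [B, hpow]
    exact keyIdent a b (2*m)
  set x : ℤ := (ab2 a b (2*m)).1 with hx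
  set y : ℤ := (ab2 a b (2*m)).2 with hy
  have hdet : (B a b (2*m)).det
      = (1+4*a-4*b)*((x^2+(3*a+b)*x*y+a*y^2)^2) := by
    rw [hBR, Matrix.det_mul, detQ, detXY]
  have hst : s (2*m) ^ 2 + (4 * a - (3 * a + b) ^ 2) * t (2*m) ^ 2
      = 4*(x^2+(3*a+b)*x*y+a*y^2) := by
    rw [hs_eq, ht_eq]
    simp only [hσ, hτ]
    ring
  have hμ' : μ = x^2+(3*a+b)*x*y+a*y^2 := by
    rw [hμ, hst, Int.mul_ediv_cancel_left _ (by norm_num : (4:ℤ) ≠ 0)]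
  constructor
  · rw [hdet, hst]; ring
  · rw [hdet, hμ']
end
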